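/- arXiv:1112.1582 — 3 statements merged into one kernel-verified Lean document; each statement's English description precedes it below -/
import Mathlib

section
/- Define on an interval I where α x + β > 0: u_e(x)² = ((α x + β)/A)^{1/p}, u(x) = √(u_e(x)² + u_cr²), h(x) = q/u(x), z⁰(x) = -(u(x)³ + 2 g q)/(2 g u(x)) + C, and z_b(x,t) = -α t + z⁰(x). Then the Exner equation ∂ₜ z_b + ∂ₓ q_b = 0 holds, where q_b(x,t) = A·(u(x)² - u_cr²)^p. -/
open Set Filter

/-- Inverting the transport law `q_b = A (u² - u_cr²)^p` at `u² = (y / A)^(1/p) + u_cr²`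
returns the flux `y`. -/
theorem mul_rpow_sq_sqrt_rpow_one_div_add_sq_sub_sq {A p y : ℝ} (k : ℝ) (hA : 0 < A) (hp : p ≠ 0)
    (hy : 0 ≤ y) :
    A * (Real.sqrt ((y / A) ^ (1 / p) + k ^ 2) ^ 2 - k ^ 2) ^ p = y := by
  have hyA : 0 ≤ y / A := div_nonneg hy hA.le
  rw [Real.sq_sqrt (by positivity), add_sub_cancel_right, one_div, Real.rpow_inv_rpow hyA hp,
    mul_div_cancel₀ y hA.ne']

theorem deriv_eq_of_eqOn_affine {f : ℝ → ℝ} {s : Set ℝ} {x : ℝ} (α β : ℝ) (hs : IsOpen s)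
    (hx : x ∈ s) (hf : ∀ y ∈ s, f y = α * y + β) : deriv f x = α := by
  rw [(eventuallyEq_of_mem (hs.mem_nhds hx) hf).deriv_eq]
  simp

theorem stmt_9_general (A p u_cr α β : ℝ)
    (hA : 0 < A) (hp : 0 < p)
    (a b : ℝ) (hIpos : ∀ x ∈ Set.Ioo a b, 0 < α * x + β)
    (u z0 qb : ℝ → ℝ) (zb : ℝ → ℝ → ℝ)
    (hu : ∀ x, u x = Real.sqrt (((α * x + β) / A) ^ ((1 : ℝ) / p) + u_cr ^ 2))
    (hzb : ∀ x t, zb x t = -α * t + z0 x)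
    (hqb : ∀ x, qb x = A * ((u x) ^ 2 - u_cr ^ 2) ^ (p : ℝ)) :
    ∀ x ∈ Set.Ioo a b, ∀ t : ℝ,
      deriv (fun s => zb x s) t + deriv qb x = 0 := by
  intro x hx t
  have hqb_affine : ∀ y ∈ Ioo a b, qb y = α * y + β := fun y hy => by
    rw [hqb, hu, mul_rpow_sq_sqrt_rpow_one_div_add_sq_sub_sq u_cr hA hp.ne' (hIpos y hy).le]
  have hqb_deriv : deriv qb x = α := deriv_eq_of_eqOn_affine α β isOpen_Ioo hx hqb_affine
  have hzb_deriv : deriv (fun s => zb x s) t = -α := by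
    simp only [hzb]
    simp
  rw [hqb_deriv, hzb_deriv, neg_add_cancel]

theorem stmt_9 (A p u_cr q g α β C : ℝ)
    (hA : 0 < A) (hp : 0 < p) (hucr : 0 ≤ u_cr) (hq : 0 < q) (hg : 0 < g)
    (a b : ℝ) (hIpos : ∀ x ∈ Set.Ioo a b, 0 < α * x + β)
    (u z0 qb : ℝ → ℝ) (zb : ℝ → ℝ → ℝ)
    (hu : ∀ x, u x = Real.sqrt (((α * x + β) / A) ^ ((1 : ℝ) / p) + u_cr ^ 2))
    (hz0 : ∀ x, z0 x = -((u x) ^ 3 + 2 * g * q) / (2 * g * u x) + C)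
    (hzb : ∀ x t, zb x t = -α * t + z0 x)
    (hqb : ∀ x, qb x = A * ((u x) ^ 2 - u_cr ^ 2) ^ (p : ℝ)) :
    ∀ x ∈ Set.Ioo a b, ∀ t : ℝ,
      deriv (fun s => zb x s) t + deriv qb x = 0 :=
  stmt_9_general A p u_cr α β hA hp a b hIpos u z0 qb zb hu hzb hqb
end

section
/- With the same definitions, the momentum equation ∂ₜ(h u) + ∂ₓ(h u² + g h²/2) + g h ∂ₓ z_b = 0 holds on I × ℝ; i.e., the triple (h, u, z_b) given in Proposition 2.1 is an exact solution of the Shallow Water–Exner system (mass, momentum, and Exner equations). -/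
/-!
Along the channel the discharge `h u = q` is constant, which gives the mass equation. Since `h u`
is constant, the momentum equation reduces to `h ∂ₓ (u²/2 + g (h + z_b)) = 0`, and `z⁰` is chosen
so that this Bernoulli head equals the constant `g (C - α t)`. Finally `u² - u_cr² = ((α x + β)/A)^{1/p}`
makes the sediment flux `q_b = α x + β` affine, so `∂ₓ q_b = α = -∂ₜ z_b`.
-/

open Filter Topology

lemma HasDerivAt.eq_zero_of_eventually_eq_const {f : ℝ → ℝ} {f' x c : ℝ}
    (hf : HasDerivAt f f' x) (hc : ∀ᶠ y in 𝓝 x, f y = c) : f' = 0 :=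
  hf.unique ((hasDerivAt_const x c).congr_of_eventuallyEq hc)

lemma deriv_momentum_flux_add_bed_slope_eq_zero {h u z : ℝ → ℝ} {x h' u' z' q g E : ℝ}
    (hh : HasDerivAt h h' x) (hu : HasDerivAt u u' x) (hz : HasDerivAt z z' x)
    (hdischarge : ∀ᶠ y in 𝓝 x, h y * u y = q)
    (hhead : ∀ᶠ y in 𝓝 x, u y ^ 2 / 2 + g * (h y + z y) = E) :
    deriv (fun y => h y * u y ^ 2 + g * h y ^ 2 / 2) x + g * h x * z' = 0 := by
  have hdischarge' : h' * u x + h x * u' = 0 :=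
    (hh.fun_mul hu).eq_zero_of_eventually_eq_const hdischarge
  have hhead' : u x * u' + g * (h' + z') = 0 := by
    convert (((hu.fun_pow 2).div_const 2).fun_add
      ((hh.fun_add hz).const_mul g)).eq_zero_of_eventually_eq_const hhead using 1
    norm_num
    ring
  have hflux := (hh.fun_mul (hu.fun_pow 2)).fun_add (((hh.fun_pow 2).const_mul g).div_const 2)
  rw [hflux.deriv]
  linear_combination u x * hdischarge' + h x * hhead'

lemma bernoulli_head_eq {u g q s c : ℝ} (hu : u ≠ 0) (hg : g ≠ 0) :
    u ^ 2 / 2 + g * (q / u + (s + (-(u ^ 3 + 2 * g * q) / (2 * g * u) + c))) = g * (s + c) := by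
  field_simp
  ring

lemma differentiableAt_sqrt_rpow_add {f : ℝ → ℝ} {x r c : ℝ} (hf : DifferentiableAt ℝ f x)
    (hfx : 0 < f x) (hc : 0 ≤ c) : DifferentiableAt ℝ (fun y => Real.sqrt (f y ^ r + c)) x := by
  fun_prop (disch := positivity)

lemma mul_sq_sqrt_rpow_one_div_add_sq_sub_sq_rpow {A p w c : ℝ} (hA : 0 < A) (hp : p ≠ 0)
    (hw : 0 ≤ w) : A * (Real.sqrt ((w / A) ^ (1 / p) + c ^ 2) ^ 2 - c ^ 2) ^ p = w := by
  have hwA : 0 ≤ w / A := div_nonneg hw hA.le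
  rw [Real.sq_sqrt (by positivity), add_sub_cancel_right, ← Real.rpow_mul hwA,
    one_div_mul_cancel hp, Real.rpow_one, mul_div_cancel₀ w hA.ne']

theorem stmt_11_general (A p u_cr q g α β C : ℝ)
    (hA : 0 < A) (hp : 0 < p) (hg : 0 < g)
    (a b : ℝ) (hIpos : ∀ x ∈ Set.Ioo a b, 0 < α * x + β)
    (u h z0 qb : ℝ → ℝ) (zb : ℝ → ℝ → ℝ)
    (hu : ∀ x, u x = Real.sqrt (((α * x + β) / A) ^ ((1 : ℝ) / p) + u_cr ^ 2))
    (hupos : ∀ x ∈ Set.Ioo a b, 0 < u x)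
    (hh : ∀ x, h x = q / u x)
    (hz0 : ∀ x, z0 x = -((u x) ^ 3 + 2 * g * q) / (2 * g * u x) + C)
    (hzb : ∀ x t, zb x t = -α * t + z0 x)
    (hqb : ∀ x, qb x = A * ((u x) ^ 2 - u_cr ^ 2) ^ (p : ℝ)) :
    ∀ x ∈ Set.Ioo a b, ∀ t : ℝ,
      (deriv (fun _ : ℝ => h x) t + deriv (fun y => h y * u y) x = 0) ∧
      (deriv (fun _ : ℝ => h x * u x) t
        + deriv (fun y => h y * (u y) ^ 2 + g * (h y) ^ 2 / 2) x
        + g * h x * deriv (fun y => zb y t) x = 0) ∧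
      (deriv (fun s => zb x s) t + deriv qb x = 0) := by
  intro x hx t
  have hnear : ∀ᶠ y in 𝓝 x, y ∈ Set.Ioo a b := isOpen_Ioo.mem_nhds hx
  have hux : u x ≠ 0 := (hupos x hx).ne'
  have hu_diff : DifferentiableAt ℝ u x := by
    rw [funext hu]
    exact differentiableAt_sqrt_rpow_add (by fun_prop) (div_pos (hIpos x hx) hA) (sq_nonneg u_cr)
  have hh_diff : DifferentiableAt ℝ h x := by
    rw [funext hh]
    exact (differentiableAt_const q).div hu_diff hux
  have hzb_diff : DifferentiableAt ℝ (fun y => zb y t) x := by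
    simp only [hzb, funext hz0]
    fun_prop (disch := positivity)
  have hdischarge : ∀ᶠ y in 𝓝 x, h y * u y = q := by
    filter_upwards [hnear] with y hy
    rw [hh, div_mul_cancel₀ q (hupos y hy).ne']
  have hhead : ∀ᶠ y in 𝓝 x, u y ^ 2 / 2 + g * (h y + zb y t) = g * (-α * t + C) := by
    filter_upwards [hnear] with y hy
    rw [hh, hzb, hz0]
    exact bernoulli_head_eq (hupos y hy).ne' hg.ne'
  have hflux : qb =ᶠ[𝓝 x] fun y => α * y + β := by
    filter_upwards [hnear] with y hy
    rw [hqb, hu]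
    exact mul_sq_sqrt_rpow_one_div_add_sq_sub_sq_rpow hA hp.ne' (hIpos y hy).le
  refine ⟨?_, ?_, ?_⟩
  · rw [deriv_const, Filter.EventuallyEq.deriv_eq (f := fun _ => q) hdischarge]
    simp
  · rw [deriv_const, zero_add]
    exact deriv_momentum_flux_add_bed_slope_eq_zero hh_diff.hasDerivAt hu_diff.hasDerivAt
      hzb_diff.hasDerivAt hdischarge hhead
  · simp only [hzb, hflux.deriv_eq]
    simp

theorem stmt_11 (A p u_cr q g α β C : ℝ)
    (hA : 0 < A) (hp : 0 < p) (hucr : 0 ≤ u_cr) (hq : 0 < q) (hg : 0 < g)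
    (a b : ℝ) (hIpos : ∀ x ∈ Set.Ioo a b, 0 < α * x + β)
    (u h z0 qb : ℝ → ℝ) (zb : ℝ → ℝ → ℝ)
    (hu : ∀ x, u x = Real.sqrt (((α * x + β) / A) ^ ((1 : ℝ) / p) + u_cr ^ 2))
    (hupos : ∀ x ∈ Set.Ioo a b, 0 < u x)
    (hh : ∀ x, h x = q / u x)
    (hz0 : ∀ x, z0 x = -((u x) ^ 3 + 2 * g * q) / (2 * g * u x) + C)
    (hzb : ∀ x t, zb x t = -α * t + z0 x)
    (hqb : ∀ x, qb x = A * ((u x) ^ 2 - u_cr ^ 2) ^ (p : ℝ)) :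
    ∀ x ∈ Set.Ioo a b, ∀ t : ℝ,
      (deriv (fun _ : ℝ => h x) t + deriv (fun y => h y * u y) x = 0) ∧
      (deriv (fun _ : ℝ => h x * u x) t
        + deriv (fun y => h y * (u y) ^ 2 + g * (h y) ^ 2 / 2) x
        + g * h x * deriv (fun y => zb y t) x = 0) ∧
      (deriv (fun s => zb x s) t + deriv qb x = 0) :=
  stmt_11_general A p u_cr q g α β C hA hp hg a b hIpos u h z0 qb zb hu hupos hh hz0 hzb hqb
end

section
/- For the Grass model solution u(x) = ((α x + β)/A_g)^{1/3} with h = q/u, the pair (h, u) together with the stationary topography z⁰(x) = -(u(x)³ + 2gq)/(2gu(x)) + C is a steady solution of the Shallow Water equations with topography: ∂ₓ(h u) = 0 and ∂ₓ(h u² + g h²/2) + g h ∂ₓ z⁰ = 0 on I. -/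
/-!
Since the discharge `h u = q` is constant, the momentum equation reduces to `h` times the
derivative of the Bernoulli head `u²/2 + g (h + z⁰)`. The topography `z⁰` is chosen exactly so
that this head equals `g C`; with Lean's `x / 0 = 0` the identity even holds where `u` vanishes,
so the head is a constant function.
-/

theorem deriv_div_mul_self {u : ℝ → ℝ} {x : ℝ} (q : ℝ) (hu : DifferentiableAt ℝ u x)
    (hux : u x ≠ 0) : deriv (fun y => q / u y * u y) x = 0 := by
  have hconst : (fun y => q / u y * u y) =ᶠ[nhds x] fun _ => q := by
    filter_upwards [hu.continuousAt.eventually_ne hux] with y hy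
    exact div_mul_cancel₀ q hy
  rw [hconst.deriv_eq, deriv_const]

theorem deriv_momentumFlux_add {h u z : ℝ → ℝ} {x : ℝ} (g : ℝ) (hh : DifferentiableAt ℝ h x)
    (hu : DifferentiableAt ℝ u x) (hz : DifferentiableAt ℝ z x) :
    deriv (fun y => h y * u y ^ 2 + g * h y ^ 2 / 2) x + g * h x * deriv z x =
      deriv (fun y => h y * u y) x * u x +
        h x * deriv (fun y => u y ^ 2 / 2 + g * (h y + z y)) x := by
  simp (disch := fun_prop) only [deriv_fun_add, deriv_fun_mul, deriv_fun_pow, deriv_div_const,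
    deriv_const]
  ring

theorem bernoulliHead_eq {u : ℝ → ℝ} (q g C : ℝ) (hg : g ≠ 0) (y : ℝ) :
    u y ^ 2 / 2 + g * (q / u y + (-(u y ^ 3 + 2 * g * q) / (2 * g * u y) + C)) = g * C := by
  rcases eq_or_ne (u y) 0 with huy | huy
  · simp [huy]
  · field_simp
    ring

theorem stmt_17_general (Ag q g α β C : ℝ) (hAg : 0 < Ag) (hg : 0 < g)
    (u h z0 : ℝ → ℝ)
    (hu : ∀ x, u x = ((α * x + β) / Ag) ^ ((1 : ℝ) / 3))
    (hh : ∀ x, h x = q / u x)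
    (hz0 : ∀ x, z0 x = -((u x) ^ 3 + 2 * g * q) / (2 * g * u x) + C) :
    ∀ x ∈ {x : ℝ | 0 < α * x + β},
      deriv (fun y => h y * u y) x = 0 ∧
      deriv (fun y => h y * (u y) ^ 2 + g * (h y) ^ 2 / 2) x
        + g * h x * deriv z0 x = 0 := by
  intro x hx
  have hs : 0 < (α * x + β) / Ag := div_pos hx hAg
  obtain rfl : h = fun y => q / u y := funext hh
  obtain rfl : z0 = fun y => -((u y) ^ 3 + 2 * g * q) / (2 * g * u y) + C := funext hz0
  have hux : u x ≠ 0 := by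
    rw [hu]
    exact (Real.rpow_pos_of_pos hs _).ne'
  have hu_diff : DifferentiableAt ℝ u x := by
    rw [funext hu]
    fun_prop (disch := exact Or.inl hs.ne')
  have hdischarge := deriv_div_mul_self q hu_diff hux
  refine ⟨hdischarge, ?_⟩
  rw [deriv_momentumFlux_add g (by fun_prop (disch := exact hux)) hu_diff
      (by fun_prop (disch := positivity)), hdischarge]
  simp only [bernoulliHead_eq q g C hg.ne', deriv_const, mul_zero, zero_mul, add_zero]

theorem stmt_17 (Ag q g α β C : ℝ) (hAg : 0 < Ag) (hq : 0 < q) (hg : 0 < g)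
    (u h z0 : ℝ → ℝ)
    (hu : ∀ x, u x = ((α * x + β) / Ag) ^ ((1 : ℝ) / 3))
    (hh : ∀ x, h x = q / u x)
    (hz0 : ∀ x, z0 x = -((u x) ^ 3 + 2 * g * q) / (2 * g * u x) + C) :
    ∀ x ∈ {x : ℝ | 0 < α * x + β},
      deriv (fun y => h y * u y) x = 0 ∧
      deriv (fun y => h y * (u y) ^ 2 + g * (h y) ^ 2 / 2) x
        + g * h x * deriv z0 x = 0 :=
  stmt_17_general Ag q g α β C hAg hg u h z0 hu hh hz0
end
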